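/- (Lemma 2.1 of the paper, abstract form.) Assume Q₀ : Y → Y is a compact operator. Then the bounded linear operator L has a finite-dimensional kernel and a closed range of finite codimension; more precisely, dim ker L = codim(range L) = dim ker(I − Q₀) < ∞, the kernel is given by ker L = { P w : w ∈ Y, Q₀ w = w }, and both ker L (in X) and range L (in Y × Z) are complemented subspaces, i.e. admit continuous linear projections P_k and P_r onto them. -/

import Mathlib

/-!
Writing `u = T⁻¹ (y, z)`, one has `L u = ((1 - Q₀) y - ℓ₀ (T⁻¹ (0, z)), z)`. Hence
`ker L = P (ker (1 - Q₀))`, and `range L` is the preimage of `range (1 - Q₀)` under the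
surjection `(y, z) ↦ y + ℓ₀ (T⁻¹ (0, z))`, so that `coker L ≃ coker (1 - Q₀)`: everything
reduces to the Riesz–Schauder theory of `1 - Q` for a compact `Q`.

The Fredholm alternative says that `1 - Q` is onto once it is injective. To compare kernel and
cokernel, take a linear `σ : ker (1 - Q) → coker (1 - Q)`, a linear section `s` of the quotient
map and a continuous projection `p` onto the finite-dimensional kernel. Then `1 - Q + s σ p` is
again the identity minus a compact operator, and it is injective (resp. onto) iff `σ` is. So `σ`
is injective iff it is onto, and comparing dimensions yields `ker (1 - Q) ≃ coker (1 - Q)`.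
Finally `range (1 - Q)` is the image of a closed complement of the kernel under the
isomorphism `1 - Q + s σ p` for a bijective `σ`, hence closed.
-/

open Function Submodule

section Banach

variable {𝕜 Y : Type*} [RCLike 𝕜] [NormedAddCommGroup Y] [NormedSpace 𝕜 Y]
  [CompleteSpace Y]

theorem ContinuousLinearMap.exists_injective_comp_eq_projectionL {A : Y →L[𝕜] Y}
    (hA : Surjective A) {M : Submodule 𝕜 Y} (hNM : IsTopCompl A.ker M) :
    ∃ B : Y →L[𝕜] Y,
      Injective B ∧ (∀ y, B y ∈ M) ∧ B * A = M.projectionL A.ker hNM.symm := by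
  have : CompleteSpace M := hNM.isClosed'.completeSpace_coe
  set q := M.projectionL A.ker hNM.symm
  have hAq : ∀ y, A (q y) = A y := fun y => by
    have hAp : A (A.ker.projectionL M hNM y) = 0 := projectionL_apply_mem hNM y
    rw [projectionL_eq_self_sub_projectionL hNM, map_sub, hAp, sub_zero]
  have hinj : Injective (A ∘L M.subtypeL) := (injective_iff_map_eq_zero _).mpr fun m hm =>
    Subtype.ext (disjoint_def.mp hNM.isCompl.disjoint m hm m.2)
  have hsurj : Surjective (A ∘L M.subtypeL) := fun y => by
    obtain ⟨x, rfl⟩ := hA y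
    exact ⟨⟨q x, projectionL_apply_mem _ x⟩, hAq x⟩
  set e := ContinuousLinearEquiv.ofBijective (A ∘L M.subtypeL)
    (LinearMap.ker_eq_bot.mpr hinj) (LinearMap.range_eq_top.mpr hsurj)
  refine ⟨M.subtypeL ∘L e.symm, M.subtype_injective.comp e.symm.injective,
    fun y => (e.symm y).2, ContinuousLinearMap.ext fun y => ?_⟩
  rw [mul_apply_eq_comp, ← hAq y]
  exact congrArg Subtype.val (e.symm_apply_apply ⟨q y, projectionL_apply_mem _ y⟩)

end Banach

namespace IsCompactOperator

variable {𝕜 Y : Type*} [RCLike 𝕜] [NormedAddCommGroup Y] [NormedSpace 𝕜 Y]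
  {Q : Y →L[𝕜] Y}

theorem finiteDimensional_ker_one_sub (hQ : IsCompactOperator Q) :
    FiniteDimensional 𝕜 (1 - Q : Y →L[𝕜] Y).ker := by
  have hfix : ∀ x ∈ (1 - Q : Y →L[𝕜] Y).ker, Q x = x :=
    fun x hx => (sub_eq_zero.mp hx).symm
  have hmaps : ∀ x ∈ (1 - Q : Y →L[𝕜] Y).ker, Q x ∈ (1 - Q : Y →L[𝕜] Y).ker :=
    fun x hx => (hfix x hx).symm ▸ hx
  have hid : ⇑((Q : Y →ₗ[𝕜] Y).restrict hmaps) = id :=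
    funext fun x => Subtype.ext (hfix x x.2)
  exact .of_isCompactOperator_id (hid ▸ hQ.restrict hmaps (1 - Q).isClosed_ker)

theorem exists_isTopCompl_and_rightInverse (hQ : IsCompactOperator Q) :
    ∃ M : Submodule 𝕜 Y, IsTopCompl (1 - Q : Y →L[𝕜] Y).ker M ∧
      ∃ s : Y ⧸ (1 - Q : Y →L[𝕜] Y).range →ₗ[𝕜] Y,
        ∀ v, (1 - Q : Y →L[𝕜] Y).range.mkQ (s v) = v := by
  have := hQ.finiteDimensional_ker_one_sub
  obtain ⟨M, hNM⟩ :=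
    (ClosedComplemented.of_finiteDimensional (1 - Q : Y →L[𝕜] Y).ker).exists_isTopCompl
  obtain ⟨s, hs⟩ := (1 - Q : Y →L[𝕜] Y).range.mkQ.exists_rightInverse_of_surjective
    (range_mkQ _)
  exact ⟨M, hNM, s, LinearMap.congr_fun hs⟩

variable [CompleteSpace Y]

theorem bijective_one_sub_of_injective (hQ : IsCompactOperator Q)
    (h : Injective (1 - Q : Y →L[𝕜] Y)) : Bijective (1 - Q : Y →L[𝕜] Y) := by
  rcases hQ.hasEigenvalue_or_mem_resolventSet one_ne_zero with hev | hres
  · obtain ⟨x, hx⟩ := hev.exists_hasEigenvector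
    have hfix : Q x = x := by simpa using hx.apply_eq_smul
    exact absurd (h (a₂ := 0) (by simp [hfix])) hx.2
  · rw [spectrum.mem_resolventSet_iff, ContinuousLinearMap.isUnit_iff_bijective] at hres
    simpa using hres

/-- The inverse `B` of `1 - Q` on a closed complement `M` of its kernel `N` satisfies
`B (1 - Q) = 1 - p` for the projection `p` onto `N` along `M`, so `B = 1 - (p - B Q)` is
injective of the same form. Hence `B` is onto `Y`, which forces `N = 0`. -/
theorem injective_one_sub_of_surjective (hQ : IsCompactOperator Q)
    (h : Surjective (1 - Q : Y →L[𝕜] Y)) : Injective (1 - Q : Y →L[𝕜] Y) := by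
  set A : Y →L[𝕜] Y := 1 - Q
  have := hQ.finiteDimensional_ker_one_sub
  obtain ⟨M, hNM⟩ := (ClosedComplemented.of_finiteDimensional A.ker).exists_isTopCompl
  obtain ⟨B, hBinj, hBM, hBA⟩ := ContinuousLinearMap.exists_injective_comp_eq_projectionL h hNM
  set p := A.ker.projectionL M hNM
  have hB : B = 1 - (p - B * Q) := by
    rw [projectionL_eq_id_sub_projectionL hNM, ← ContinuousLinearMap.one_def, mul_sub,
      mul_one] at hBA
    calc B = (B - B * Q) + B * Q := by abel
      _ = 1 - (p - B * Q) := by rw [hBA]; abel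
  have hcomp : IsCompactOperator (p - B * Q) := by
    rw [FunLike.coe_sub, FunLike.coe_mul_eq_comp]
    exact ((isCompactOperator_of_locallyCompactSpace_rng A.ker.subtypeL).comp_clm
      (A.ker.projectionOntoL M hNM)).sub (hQ.clm_comp B)
  have hBsurj := (hcomp.bijective_one_sub_of_injective (hB ▸ hBinj)).2
  rw [← hB] at hBsurj
  refine (injective_iff_map_eq_zero _).mpr fun k hk => ?_
  obtain ⟨y, rfl⟩ := hBsurj k
  exact disjoint_def.mp hNM.isCompl.disjoint _ hk (hBM y)

end IsCompactOperator

section FiniteRankCorrection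

variable {𝕜 Y : Type*} [RCLike 𝕜] [NormedAddCommGroup Y] [NormedSpace 𝕜 Y]
  {A : Y →L[𝕜] Y} [FiniteDimensional 𝕜 A.ker] {M : Submodule 𝕜 Y}
  (hNM : IsTopCompl A.ker M)
  (s : Y ⧸ A.range →ₗ[𝕜] Y) (σ : A.ker →ₗ[𝕜] Y ⧸ A.range)

noncomputable def finiteRankCorrection : Y →L[𝕜] Y :=
  (s ∘ₗ σ).toContinuousLinearMap ∘L A.ker.projectionOntoL M hNM

variable {s σ}

theorem add_finiteRankCorrection_apply_ker (k : A.ker) :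
    (A + finiteRankCorrection hNM s σ) k = s (σ k) := by
  have hAk : A k = 0 := k.2
  simp [finiteRankCorrection, projectionOntoL_apply_left, hAk]

theorem finiteRankCorrection_apply_of_mem {m : Y} (hm : m ∈ M) :
    finiteRankCorrection hNM s σ m = 0 := by
  simp [finiteRankCorrection, projectionOntoL_apply_right hNM ⟨m, hm⟩]

theorem mkQ_add_finiteRankCorrection (hs : ∀ v, A.range.mkQ (s v) = v) (y : Y) :
    A.range.mkQ ((A + finiteRankCorrection hNM s σ) y) = σ (A.ker.projectionOntoL M hNM y) := by
  have hAy : A.range.mkQ (A y) = 0 := (Submodule.Quotient.mk_eq_zero _).mpr ⟨y, rfl⟩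
  rw [add_apply, map_add, hAy, zero_add]
  exact hs _

theorem isCompactOperator_finiteRankCorrection :
    IsCompactOperator (finiteRankCorrection hNM s σ) :=
  (isCompactOperator_of_locallyCompactSpace_rng (s ∘ₗ σ).toContinuousLinearMap).comp_clm
    (A.ker.projectionOntoL M hNM)

theorem injective_add_finiteRankCorrection (hs : ∀ v, A.range.mkQ (s v) = v)
    (hσ : Injective σ) : Injective (A + finiteRankCorrection hNM s σ) := by
  refine (injective_iff_map_eq_zero _).mpr fun y hy => ?_
  have hpy : A.ker.projectionOntoL M hNM y = 0 :=
    hσ (by rw [← mkQ_add_finiteRankCorrection hNM hs, hy, map_zero, map_zero])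
  have hyM : y ∈ M := (projectionOntoL_apply_eq_zero_iff hNM).mp hpy
  have hAy : A y = 0 := by
    simpa [finiteRankCorrection_apply_of_mem hNM hyM] using hy
  exact disjoint_def.mp hNM.isCompl.disjoint y hAy hyM

theorem injective_of_injective_add_finiteRankCorrection
    (h : Injective (A + finiteRankCorrection hNM s σ)) : Injective σ := by
  refine (injective_iff_map_eq_zero _).mpr fun k hk => Subtype.ext (h ?_)
  rw [ZeroMemClass.coe_zero, map_zero, add_finiteRankCorrection_apply_ker, hk, map_zero]

theorem surjective_of_surjective_add_finiteRankCorrection (hs : ∀ v, A.range.mkQ (s v) = v)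
    (h : Surjective (A + finiteRankCorrection hNM s σ)) : Surjective σ := fun v => by
  obtain ⟨y, rfl⟩ := A.range.mkQ_surjective v
  obtain ⟨x, rfl⟩ := h y
  exact ⟨_, (mkQ_add_finiteRankCorrection hNM hs x).symm⟩

theorem range_eq_map_add_finiteRankCorrection :
    A.range = M.map ((A + finiteRankCorrection hNM s σ : Y →L[𝕜] Y) : Y →ₗ[𝕜] Y) := by
  ext y
  constructor
  · rintro ⟨x, rfl⟩
    have hqx : M.projectionL A.ker hNM.symm x ∈ M := projectionL_apply_mem _ x
    have hApx : A (A.ker.projectionL M hNM x) = 0 := projectionL_apply_mem hNM x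
    refine ⟨_, hqx, ?_⟩
    rw [ContinuousLinearMap.coe_coe, add_apply, finiteRankCorrection_apply_of_mem hNM hqx,
      add_zero, projectionL_eq_self_sub_projectionL hNM, map_sub, hApx, sub_zero]
    rfl
  · rintro ⟨m, hm, rfl⟩
    exact ⟨m, by simp [finiteRankCorrection_apply_of_mem hNM hm]⟩

theorem surjective_add_finiteRankCorrection (hs : ∀ v, A.range.mkQ (s v) = v)
    (hσ : Surjective σ) : Surjective (A + finiteRankCorrection hNM s σ) := fun y => by
  obtain ⟨k, hk⟩ := hσ (A.range.mkQ y)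
  have hy : y - s (σ k) ∈ A.range := by
    rw [← Submodule.Quotient.mk_eq_zero, ← A.range.mkQ_apply, map_sub, hs, hk, sub_self]
  obtain ⟨m, -, hm⟩ := (range_eq_map_add_finiteRankCorrection hNM (s := s) (σ := σ)).le hy
  refine ⟨m + k, ?_⟩
  rw [map_add, ← ContinuousLinearMap.coe_coe, hm, ContinuousLinearMap.coe_coe,
    add_finiteRankCorrection_apply_ker, sub_add_cancel]

end FiniteRankCorrection

namespace IsCompactOperator

variable {𝕜 Y : Type*} [RCLike 𝕜] [NormedAddCommGroup Y] [NormedSpace 𝕜 Y]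
  [CompleteSpace Y] {Q : Y →L[𝕜] Y}

theorem injective_iff_surjective_one_sub (hQ : IsCompactOperator Q) :
    Injective (1 - Q : Y →L[𝕜] Y) ↔ Surjective (1 - Q : Y →L[𝕜] Y) :=
  ⟨fun h => (hQ.bijective_one_sub_of_injective h).2, hQ.injective_one_sub_of_surjective⟩

theorem injective_iff_surjective_one_sub_add (hQ : IsCompactOperator Q) {G : Y →L[𝕜] Y}
    (hG : IsCompactOperator G) :
    Injective (1 - Q + G : Y →L[𝕜] Y) ↔ Surjective (1 - Q + G : Y →L[𝕜] Y) := by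
  have hQG : IsCompactOperator (Q - G) := by
    rw [FunLike.coe_sub]
    exact hQ.sub hG
  have h : (1 - Q + G : Y →L[𝕜] Y) = 1 - (Q - G) := by abel
  rw [h]
  exact hQG.injective_iff_surjective_one_sub

theorem bijective_one_sub_add_finiteRankCorrection (hQ : IsCompactOperator Q)
    [FiniteDimensional 𝕜 (1 - Q : Y →L[𝕜] Y).ker] {M : Submodule 𝕜 Y}
    (hNM : IsTopCompl (1 - Q : Y →L[𝕜] Y).ker M)
    {s : Y ⧸ (1 - Q : Y →L[𝕜] Y).range →ₗ[𝕜] Y}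
    (hs : ∀ v, (1 - Q : Y →L[𝕜] Y).range.mkQ (s v) = v)
    {σ : (1 - Q : Y →L[𝕜] Y).ker →ₗ[𝕜] Y ⧸ (1 - Q : Y →L[𝕜] Y).range}
    (hσ : Injective σ ∨ Surjective σ) :
    Bijective (1 - Q + finiteRankCorrection hNM s σ : Y →L[𝕜] Y) := by
  have key := hQ.injective_iff_surjective_one_sub_add
    (isCompactOperator_finiteRankCorrection hNM (s := s) (σ := σ))
  rcases hσ with hσ | hσ
  · have h := injective_add_finiteRankCorrection hNM hs hσ
    exact ⟨h, key.mp h⟩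
  · have h := surjective_add_finiteRankCorrection hNM hs hσ
    exact ⟨key.mpr h, h⟩

theorem bijective_of_injective_or_surjective_ker_to_coker (hQ : IsCompactOperator Q)
    {σ : (1 - Q : Y →L[𝕜] Y).ker →ₗ[𝕜] Y ⧸ (1 - Q : Y →L[𝕜] Y).range}
    (hσ : Injective σ ∨ Surjective σ) : Bijective σ := by
  have := hQ.finiteDimensional_ker_one_sub
  obtain ⟨M, hNM, s, hs⟩ := hQ.exists_isTopCompl_and_rightInverse
  have h := hQ.bijective_one_sub_add_finiteRankCorrection hNM hs hσ
  exact ⟨injective_of_injective_add_finiteRankCorrection hNM h.1,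
    surjective_of_surjective_add_finiteRankCorrection hNM hs h.2⟩

theorem nonempty_linearEquiv_ker_one_sub_quotient_range (hQ : IsCompactOperator Q) :
    Nonempty ((1 - Q : Y →L[𝕜] Y).ker ≃ₗ[𝕜] Y ⧸ (1 - Q : Y →L[𝕜] Y).range) := by
  rcases le_total (Module.rank 𝕜 (1 - Q : Y →L[𝕜] Y).ker)
    (Module.rank 𝕜 (Y ⧸ (1 - Q : Y →L[𝕜] Y).range)) with h | h
  · obtain ⟨σ, hσ⟩ := rank_le_iff_exists_linearMap.mp h
    exact ⟨.ofBijective σ (hQ.bijective_of_injective_or_surjective_ker_to_coker (.inl hσ))⟩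
  · obtain ⟨τ, hτ⟩ := rank_le_iff_exists_linearMap.mp h
    obtain ⟨σ, hστ⟩ := τ.exists_leftInverse_of_injective (LinearMap.ker_eq_bot.mpr hτ)
    have hσ : Surjective σ := fun v => ⟨τ v, LinearMap.congr_fun hστ v⟩
    exact ⟨.ofBijective σ (hQ.bijective_of_injective_or_surjective_ker_to_coker (.inr hσ))⟩

theorem isClosed_range_one_sub (hQ : IsCompactOperator Q) :
    IsClosed ((1 - Q : Y →L[𝕜] Y).range : Set Y) := by
  have := hQ.finiteDimensional_ker_one_sub
  obtain ⟨M, hNM, s, hs⟩ := hQ.exists_isTopCompl_and_rightInverse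
  obtain ⟨e⟩ := hQ.nonempty_linearEquiv_ker_one_sub_quotient_range
  have h := hQ.bijective_one_sub_add_finiteRankCorrection hNM hs (σ := e) (.inl e.injective)
  rw [range_eq_map_add_finiteRankCorrection hNM (s := s) (σ := e), Submodule.map_coe]
  exact (ContinuousLinearEquiv.ofBijective _ (LinearMap.ker_eq_bot.mpr h.1)
    (LinearMap.range_eq_top.mpr h.2)).isClosed_image.mpr hNM.isClosed'

end IsCompactOperator

noncomputable def Submodule.quotientComapEquivOfSurjective {R E F : Type*} [Ring R]
    [AddCommGroup E] [Module R E] [AddCommGroup F] [Module R F] (f : E →ₗ[R] F)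
    (hf : Surjective f) (p : Submodule R F) : (E ⧸ p.comap f) ≃ₗ[R] F ⧸ p :=
  (quotEquivOfEq _ _ (by rw [LinearMap.ker_comp, ker_mkQ])).trans
    ((p.mkQ ∘ₗ f).quotKerEquivOfSurjective (p.mkQ_surjective.comp hf))

theorem Submodule.ClosedComplemented.exists_idempotent_range_eq {R E : Type*} [Ring R]
    [AddCommGroup E] [Module R E] [TopologicalSpace E] {p : Submodule R E}
    (h : p.ClosedComplemented) :
    ∃ π : E →L[R] E, (∀ x, π (π x) = π x) ∧ (π : E →ₗ[R] E).range = p := by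
  obtain ⟨q, hpq⟩ := h.exists_isTopCompl
  exact ⟨p.projectionL q hpq, DFunLike.congr_fun (isIdempotentElem_projectionL hpq),
    range_projectionL hpq⟩

namespace PerturbedIsomorphism

variable {𝕜 X Y Z : Type*} [NormedField 𝕜] [NormedAddCommGroup X] [NormedSpace 𝕜 X]
  [NormedAddCommGroup Y] [NormedSpace 𝕜 Y] [NormedAddCommGroup Z] [NormedSpace 𝕜 Z]
  {T : X ≃L[𝕜] Y × Z} {ℓ₀ : X →L[𝕜] Y} {P : Y →L[𝕜] X} {Q₀ : Y →L[𝕜] Y}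
  {L : X →L[𝕜] Y × Z}

theorem apply_symm (hP : ∀ y, P y = T.symm (y, 0)) (hQ₀ : ∀ y, Q₀ y = ℓ₀ (P y))
    (hL : ∀ u, L u = ((T u).1 - ℓ₀ u, (T u).2)) (y : Y) (z : Z) :
    L (T.symm (y, z)) = ((1 - Q₀) y - ℓ₀ (T.symm (0, z)), z) := by
  have hyz : T.symm (y, z) = P y + T.symm (0, z) := by
    rw [hP, ← map_add, Prod.mk_add_mk, add_zero, zero_add]
  rw [hL, T.apply_symm_apply, hyz, map_add, ← hQ₀]
  simp [sub_sub]

theorem ker_eq_map (hP : ∀ y, P y = T.symm (y, 0)) (hQ₀ : ∀ y, Q₀ y = ℓ₀ (P y))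
    (hL : ∀ u, L u = ((T u).1 - ℓ₀ u, (T u).2)) :
    (L : X →ₗ[𝕜] Y × Z).ker =
      (1 - Q₀ : Y →L[𝕜] Y).ker.map (P : Y →ₗ[𝕜] X) := by
  ext u
  obtain ⟨⟨y, z⟩, rfl⟩ := T.symm.surjective u
  simp only [LinearMap.mem_ker, ContinuousLinearMap.coe_coe, apply_symm hP hQ₀ hL, mem_map]
  constructor
  · intro h
    obtain ⟨h1, rfl⟩ := Prod.mk_eq_zero.mp h
    exact ⟨y, by simpa [Prod.mk_zero_zero] using h1, hP y⟩
  · rintro ⟨w, hw, hwyz⟩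
    rw [hP] at hwyz
    obtain ⟨rfl, rfl⟩ := Prod.mk.inj (T.symm.injective hwyz)
    simpa [Prod.mk_zero_zero] using hw

variable (T ℓ₀) in
noncomputable def coupling : Y × Z →L[𝕜] Y :=
  .fst 𝕜 Y Z + ℓ₀ ∘L (T.symm : Y × Z →L[𝕜] X) ∘L .inr 𝕜 Y Z ∘L .snd 𝕜 Y Z

theorem coupling_apply (p : Y × Z) : coupling T ℓ₀ p = p.1 + ℓ₀ (T.symm (0, p.2)) := rfl

theorem coupling_surjective : Surjective (coupling T ℓ₀) := fun y =>
  ⟨(y, 0), by simp [coupling_apply, Prod.mk_zero_zero]⟩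

theorem range_eq_comap (hP : ∀ y, P y = T.symm (y, 0)) (hQ₀ : ∀ y, Q₀ y = ℓ₀ (P y))
    (hL : ∀ u, L u = ((T u).1 - ℓ₀ u, (T u).2)) :
    (L : X →ₗ[𝕜] Y × Z).range =
      (1 - Q₀ : Y →L[𝕜] Y).range.comap (coupling T ℓ₀ : Y × Z →ₗ[𝕜] Y) := by
  ext p
  constructor
  · rintro ⟨u, rfl⟩
    obtain ⟨⟨y, z⟩, rfl⟩ := T.symm.surjective u
    exact ⟨y, by simp [apply_symm hP hQ₀ hL, coupling_apply]⟩
  · rintro ⟨y, hy⟩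
    refine ⟨T.symm (y, p.2), ?_⟩
    rw [ContinuousLinearMap.coe_coe, apply_symm hP hQ₀ hL]
    simp only [ContinuousLinearMap.coe_coe, coupling_apply] at hy
    rw [hy, add_sub_cancel_right]

end PerturbedIsomorphism

open PerturbedIsomorphism

theorem stmt_7_general
    {X Y Z : Type*}
    [NormedAddCommGroup X] [NormedSpace ℝ X]
    [NormedAddCommGroup Y] [NormedSpace ℝ Y] [CompleteSpace Y]
    [NormedAddCommGroup Z] [NormedSpace ℝ Z]
    (T : X ≃L[ℝ] Y × Z)
    (P : Y →L[ℝ] X)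
    (hP : ∀ y : Y, P y = T.symm (y, 0))
    (ℓ₀ : X →L[ℝ] Y)
    (Q₀ : Y →L[ℝ] Y) (hQ₀ : ∀ y : Y, Q₀ y = ℓ₀ (P y))
    (L : X →L[ℝ] Y × Z)
    (hL : ∀ u : X, L u = ((T u).1 - ℓ₀ u, (T u).2))
    (hcomp : IsCompactOperator ⇑Q₀) :
    FiniteDimensional ℝ (LinearMap.ker (L : X →ₗ[ℝ] Y × Z)) ∧
    IsClosed (LinearMap.range (L : X →ₗ[ℝ] Y × Z) : Set (Y × Z)) ∧
    FiniteDimensional ℝ ((Y × Z) ⧸ LinearMap.range (L : X →ₗ[ℝ] Y × Z)) ∧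
    Module.finrank ℝ (LinearMap.ker (L : X →ₗ[ℝ] Y × Z)) =
      Module.finrank ℝ (LinearMap.ker ((ContinuousLinearMap.id ℝ Y - Q₀ : Y →L[ℝ] Y) : Y →ₗ[ℝ] Y)) ∧
    Module.finrank ℝ ((Y × Z) ⧸ LinearMap.range (L : X →ₗ[ℝ] Y × Z)) =
      Module.finrank ℝ (LinearMap.ker ((ContinuousLinearMap.id ℝ Y - Q₀ : Y →L[ℝ] Y) : Y →ₗ[ℝ] Y)) ∧
    (LinearMap.ker (L : X →ₗ[ℝ] Y × Z) : Set X) = ⇑P '' {w : Y | Q₀ w = w} ∧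
    (∃ P_k : X →L[ℝ] X,
      (∀ x : X, P_k (P_k x) = P_k x) ∧ LinearMap.range (P_k : X →ₗ[ℝ] X) = LinearMap.ker (L : X →ₗ[ℝ] Y × Z)) ∧
    (∃ P_r : Y × Z →L[ℝ] Y × Z,
      (∀ p : Y × Z, P_r (P_r p) = P_r p) ∧ LinearMap.range (P_r : Y × Z →ₗ[ℝ] Y × Z) = LinearMap.range (L : X →ₗ[ℝ] Y × Z)) := by
  rw [← ContinuousLinearMap.one_def]
  have hker := ker_eq_map hP hQ₀ hL
  have hrange := range_eq_comap hP hQ₀ hL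
  have := hcomp.finiteDimensional_ker_one_sub
  obtain ⟨e⟩ := hcomp.nonempty_linearEquiv_ker_one_sub_quotient_range
  have hPinj : Injective P := fun a b hab => by
    simpa using T.symm.injective ((hP a).symm.trans (hab.trans (hP b)))
  let eker := ((1 - Q₀ : Y →L[ℝ] Y).ker.equivMapOfInjective _ hPinj).trans
    (LinearEquiv.ofEq _ _ hker.symm)
  let ecoker := (quotEquivOfEq _ _ hrange).trans
    ((quotientComapEquivOfSurjective _ coupling_surjective _).trans e.symm)
  have hclosed : IsClosed ((L : X →ₗ[ℝ] Y × Z).range : Set (Y × Z)) := by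
    rw [hrange]
    exact hcomp.isClosed_range_one_sub.preimage (coupling T ℓ₀).continuous
  have hkerfd := eker.finiteDimensional
  have hcokerfd := ecoker.symm.finiteDimensional
  refine ⟨hkerfd, hclosed, hcokerfd, eker.finrank_eq.symm, ecoker.finrank_eq, ?_,
    (ClosedComplemented.of_finiteDimensional _).exists_idempotent_range_eq,
    (ClosedComplemented.of_finiteDimensional_quotient hclosed).exists_idempotent_range_eq⟩
  rw [hker, map_coe]
  congr 1
  ext w
  simp [sub_eq_zero, eq_comm (a := Q₀ w)]

/-- Lemma 2.1, abstract form: if `Q₀` is compact then `L` has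
finite-dimensional kernel and closed range of finite codimension, with
`dim ker L = codim (range L) = dim ker (I − Q₀) < ∞`, the kernel is
`{ P w : Q₀ w = w }`, and both `ker L` and `range L` are complemented, i.e. admit
continuous linear projections onto them. -/
theorem stmt_7
    {X Y Z : Type*}
    [NormedAddCommGroup X] [NormedSpace ℝ X] [CompleteSpace X]
    [NormedAddCommGroup Y] [NormedSpace ℝ Y] [CompleteSpace Y]
    [NormedAddCommGroup Z] [NormedSpace ℝ Z] [CompleteSpace Z]
    (T : X ≃L[ℝ] Y × Z)
    (P : Y →L[ℝ] X) (K : Z →L[ℝ] X)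
    (hP : ∀ y : Y, P y = T.symm (y, 0))
    (hK : ∀ z : Z, K z = T.symm (0, z))
    (ℓ₀ : X →L[ℝ] Y)
    (Q₀ : Y →L[ℝ] Y) (hQ₀ : ∀ y : Y, Q₀ y = ℓ₀ (P y))
    (L : X →L[ℝ] Y × Z)
    (hL : ∀ u : X, L u = ((T u).1 - ℓ₀ u, (T u).2))
    (hcomp : IsCompactOperator ⇑Q₀) :
    FiniteDimensional ℝ (LinearMap.ker (L : X →ₗ[ℝ] Y × Z)) ∧
    IsClosed (LinearMap.range (L : X →ₗ[ℝ] Y × Z) : Set (Y × Z)) ∧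
    FiniteDimensional ℝ ((Y × Z) ⧸ LinearMap.range (L : X →ₗ[ℝ] Y × Z)) ∧
    Module.finrank ℝ (LinearMap.ker (L : X →ₗ[ℝ] Y × Z)) =
      Module.finrank ℝ (LinearMap.ker ((ContinuousLinearMap.id ℝ Y - Q₀ : Y →L[ℝ] Y) : Y →ₗ[ℝ] Y)) ∧
    Module.finrank ℝ ((Y × Z) ⧸ LinearMap.range (L : X →ₗ[ℝ] Y × Z)) =
      Module.finrank ℝ (LinearMap.ker ((ContinuousLinearMap.id ℝ Y - Q₀ : Y →L[ℝ] Y) : Y →ₗ[ℝ] Y)) ∧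
    (LinearMap.ker (L : X →ₗ[ℝ] Y × Z) : Set X) = ⇑P '' {w : Y | Q₀ w = w} ∧
    (∃ P_k : X →L[ℝ] X,
      (∀ x : X, P_k (P_k x) = P_k x) ∧ LinearMap.range (P_k : X →ₗ[ℝ] X) = LinearMap.ker (L : X →ₗ[ℝ] Y × Z)) ∧
    (∃ P_r : Y × Z →L[ℝ] Y × Z,
      (∀ p : Y × Z, P_r (P_r p) = P_r p) ∧ LinearMap.range (P_r : Y × Z →ₗ[ℝ] Y × Z) = LinearMap.range (L : X →ₗ[ℝ] Y × Z)) :=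
  stmt_7_general T P hP ℓ₀ Q₀ hQ₀ L hL hcomp
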